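/- arXiv:1404.5940 — 2 statements merged into one kernel-verified Lean document; each statement's English description precedes it below -/
import Mathlib

section
/- For a cq state ρ^{RX} = Σ_x p_x ρ_x ⊗ |x⟩⟨x| with the |x⟩ an orthonormal basis of an m-dimensional space, and α ∈ (1,2], the Rényi entropy satisfies log m ≥ S_α(RX)_ρ − S_α(R)_ρ ≥ 0, where S_α(τ) = (1/(1−α)) log Tr(τ^α), S_α(R)_ρ uses the reduced state Σ_x p_x ρ_x, and S_α(RX)_ρ = (1/(1−α)) log Σ_x p_x^α Tr(ρ_x^α). -/
open Matrix BigOperators Kronecker ComplexOrder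

noncomputable def funCalc {n : Type*} [Fintype n] [DecidableEq n]
    (f : ℝ → ℝ) (A : Matrix n n ℂ) : Matrix n n ℂ :=
  if h : A.IsHermitian then
    (h.eigenvectorUnitary : Matrix n n ℂ) *
      Matrix.diagonal (fun i => (f (h.eigenvalues i) : ℂ)) *
      star (h.eigenvectorUnitary : Matrix n n ℂ)
  else 0

/-- Matrix power via functional calculus. -/
noncomputable def mpow {n : Type*} [Fintype n] [DecidableEq n]
    (A : Matrix n n ℂ) (α : ℝ) : Matrix n n ℂ :=
  funCalc (fun x => x ^ α) A

/-- A density matrix: positive semidefinite with unit trace. -/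
def IsDensity {n : Type*} [Fintype n] [DecidableEq n] (ρ : Matrix n n ℂ) : Prop :=
  ρ.PosSemidef ∧ ρ.trace = 1

/-- Partial trace over the second factor. -/
noncomputable def ptraceB {a b : Type*} [Fintype a] [Fintype b]
    (M : Matrix (a × b) (a × b) ℂ) : Matrix a a ℂ :=
  Matrix.of fun i j => ∑ k : b, M (i, k) (j, k)

/-- Partial trace over the first factor. -/
noncomputable def ptraceA {a b : Type*} [Fintype a] [Fintype b]
    (M : Matrix (a × b) (a × b) ℂ) : Matrix b b ℂ :=
  Matrix.of fun i j => ∑ k : a, M (k, i) (k, j)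

/-- Fidelity F(ρ,σ) = Tr √(√σ ρ √σ). -/
noncomputable def fid {n : Type*} [Fintype n] [DecidableEq n]
    (ρ σ : Matrix n n ℂ) : ℝ :=
  ((mpow (mpow σ (1/2) * ρ * mpow σ (1/2)) (1/2)).trace).re

/-- Outer product |ψ⟩⟨ψ|. -/
noncomputable def outer {n : Type*} (ψ : n → ℂ) : Matrix n n ℂ :=
  Matrix.of fun i j => ψ i * star (ψ j)

/-- Separability of a bipartite state. -/
def IsSepState {a b : Type*} [Fintype a] [Fintype b] [DecidableEq a] [DecidableEq b]
    (σ : Matrix (a × b) (a × b) ℂ) : Prop :=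
  ∃ (k : ℕ) (q : Fin k → ℝ) (τ : Fin k → Matrix a a ℂ) (ω : Fin k → Matrix b b ℂ),
    (∀ i, 0 ≤ q i) ∧ (∑ i, q i = 1) ∧ (∀ i, IsDensity (τ i)) ∧ (∀ i, IsDensity (ω i)) ∧
    σ = ∑ i, (q i : ℂ) • (τ i ⊗ₖ ω i)

/-- von Neumann entropy (base 2). -/
noncomputable def vnEntropy {n : Type*} [Fintype n] [DecidableEq n]
    (τ : Matrix n n ℂ) : ℝ :=
  -(τ * funCalc (Real.logb 2) τ).trace.re

/-- Rényi entropy of order β (base 2), with the von Neumann limit at β = 1. -/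
noncomputable def renyiEntropy {n : Type*} [Fintype n] [DecidableEq n]
    (β : ℝ) (τ : Matrix n n ℂ) : ℝ :=
  if β = 1 then vnEntropy τ else (1 / (1 - β)) * Real.logb 2 ((mpow τ β).trace.re)

/-- Rényi relative entropy of order α (base 2). -/
noncomputable def renyiRel {n : Type*} [Fintype n] [DecidableEq n]
    (α : ℝ) (ρ σ : Matrix n n ℂ) : ℝ :=
  (1 / (α - 1)) * Real.logb 2 ((mpow ρ α * mpow σ (1 - α)).trace.re)

/-!
Write `σ = ∑ₓ pₓ ρₓ` with eigenvalues `λᵢ`, and `ρₓ = ∑ⱼ rₓⱼ |wₓⱼ⟩⟨wₓⱼ|`. In the eigenbasis of `σ`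
this reads `diag λ = ∑ₓⱼ pₓ rₓⱼ |vₓⱼ⟩⟨vₓⱼ|` with unit vectors `vₓⱼ`, and the matrix
`(|vₓⱼ(i)|²)ᵢⱼ` is doubly stochastic for every `x`.

Lower bound: each rank-one term `c |v⟩⟨v|` is dominated by `diag λ`; testing this on `diag λ⁻¹ v`
shows that `c` is at most the `|v(i)|²`-weighted harmonic mean of `λ`, so by Hölder
`c^(α-1) ≤ ∑ᵢ |v(i)|² λᵢ^(α-1)`. Multiplying by `c` and summing over all terms gives
`∑ₓ pₓ^α Tr ρₓ^α ≤ ∑ᵢ λᵢ^α = Tr σ^α`.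

Upper bound: `λᵢ = ∑ₓ pₓ μₓᵢ`, where `μₓ` is the image of `rₓ` under a doubly stochastic matrix.
The power-mean inequality over the `m` values of `x` costs a factor `m^(α-1)`, and Jensen's
inequality for a doubly stochastic matrix gives `∑ᵢ μₓᵢ^α ≤ ∑ⱼ rₓⱼ^α`.

Taking `logb 2` of `Tr σ^α / ∑ₓ pₓ^α Tr ρₓ^α ∈ [1, m^(α-1)]` yields both bounds.
-/

open Finset

section RealInequalities

variable {κ : Type*} [Fintype κ]

lemma Real.rpow_eq_mul_rpow_sub_one {x y : ℝ} (hx : 0 ≤ x) (hy : y ≠ 0) :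
    x ^ y = x * x ^ (y - 1) := by
  conv_lhs => rw [← add_sub_cancel 1 y, Real.rpow_add' hx (by simpa using hy), Real.rpow_one]

lemma rpow_le_sum_mul_rpow_of_mul_sq_le {w l : κ → ℝ} {a β : ℝ} (hw : ∀ i, 0 ≤ w i)
    (hw1 : ∑ i, w i = 1) (ha : 0 ≤ a) (hβ : 0 < β) (hdiag : ∀ i, a * w i ≤ l i)
    (hquad : a * (∑ i, w i / l i) ^ 2 ≤ ∑ i, w i / l i) :
    a ^ β ≤ ∑ i, w i * l i ^ β := by
  have hl i : 0 ≤ l i := (mul_nonneg ha (hw i)).trans (hdiag i)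
  rcases ha.eq_or_lt with rfl | ha
  · rw [Real.zero_rpow hβ.ne']
    exact sum_nonneg fun i _ => mul_nonneg (hw i) (Real.rpow_nonneg (hl i) β)
  have hw0 i (h : l i = 0) : w i = 0 :=
    le_antisymm (by nlinarith [hdiag i]) (hw i)
  have hcancel i (t : ℝ) : w i / l i * l i ^ (1 + t) = w i * l i ^ t := by
    rcases (hl i).eq_or_lt with h | h
    · simp [hw0 i h.symm]
    · rw [Real.rpow_add h, Real.rpow_one]; field_simp
  set S := ∑ i, w i / l i
  set X := ∑ i, w i * l i ^ β
  have hX : 0 ≤ X := sum_nonneg fun i _ => mul_nonneg (hw i) (Real.rpow_nonneg (hl i) β)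
  set q := 1 + β
  have hq : 0 < q := by positivity
  -- Hölder with exponents `q / β` and `q` for the weights `w / l`
  have holder : 1 ≤ S ^ (1 - q⁻¹) * X ^ q⁻¹ := by
    have h := Real.inner_le_weight_mul_Lp_of_nonneg univ (by linarith : 1 ≤ q) (fun i => w i / l i)
      l (fun i => div_nonneg (hw i) (hl i)) hl
    have h1 : ∑ i, w i / l i * l i = 1 := by
      rw [← hw1]; exact sum_congr rfl fun i _ => by simpa using hcancel i 0
    rwa [h1, sum_congr rfl fun i _ => hcancel i β] at h
  have hS : 0 < S := by
    refine (sum_nonneg fun i _ => div_nonneg (hw i) (hl i)).lt_of_ne' fun h0 => ?_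
    rw [show S = 0 from h0, Real.zero_rpow (sub_pos.2 (inv_lt_one_of_one_lt₀ (by linarith))).ne',
      zero_mul] at holder
    linarith
  have key : 1 ≤ S ^ β * X := by
    have := Real.rpow_le_rpow zero_le_one holder hq.le
    rwa [Real.one_rpow, Real.mul_rpow (by positivity) (by positivity), ← Real.rpow_mul hS.le,
      ← Real.rpow_mul hX, inv_mul_cancel₀ hq.ne', Real.rpow_one,
      show (1 - q⁻¹) * q = β by field_simp; ring] at this
  have haS : (a * S) ^ β ≤ 1 :=
    Real.rpow_le_one (by positivity) (by nlinarith) hβ.le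
  calc a ^ β ≤ a ^ β * (S ^ β * X) := le_mul_of_one_le_right (by positivity) key
    _ = (a * S) ^ β * X := by rw [Real.mul_rpow ha.le hS.le]; ring
    _ ≤ X := mul_le_of_le_one_left hX haS

lemma sum_mulVec_rpow_le_of_mem_doublyStochastic [DecidableEq κ] {M : Matrix κ κ ℝ}
    (hM : M ∈ doublyStochastic ℝ κ) {r : κ → ℝ} (hr : ∀ j, 0 ≤ r j) {α : ℝ} (hα : 1 ≤ α) :
    ∑ i, (M *ᵥ r) i ^ α ≤ ∑ j, r j ^ α :=
  calc ∑ i, (M *ᵥ r) i ^ α ≤ ∑ i, ∑ j, M i j * r j ^ α :=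
        sum_le_sum fun i _ => Real.rpow_arith_mean_le_arith_mean_rpow univ (M i) r
          (fun _ _ => nonneg_of_mem_doublyStochastic hM) (sum_row_of_mem_doublyStochastic hM i)
          (fun j _ => hr j) hα
    _ = ∑ j, r j ^ α := by
        rw [sum_comm]
        simp_rw [← sum_mul, sum_col_of_mem_doublyStochastic hM, one_mul]

end RealInequalities

lemma one_div_one_sub_mul_logb_sub_mem_Icc {T Q M α : ℝ} (hα : 1 < α) (hM0 : 0 ≤ M)
    (hT : 0 < T) (hTQ : T ≤ Q) (hQM : Q ≤ M ^ (α - 1) * T) :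
    1 / (1 - α) * Real.logb 2 T - 1 / (1 - α) * Real.logb 2 Q ∈ Set.Icc 0 (Real.logb 2 M) := by
  have hM : 0 < M := by
    by_contra! h
    rw [le_antisymm h hM0, Real.zero_rpow (by linarith), zero_mul] at hQM
    linarith
  have hQ : 0 < Q := hT.trans_le hTQ
  have hdiff : 1 / (1 - α) * Real.logb 2 T - 1 / (1 - α) * Real.logb 2 Q
      = (Real.logb 2 Q - Real.logb 2 T) / (α - 1) := by
    field_simp [show 1 - α ≠ 0 by linarith, show α - 1 ≠ 0 by linarith]
    ring
  have hupper : Real.logb 2 Q - Real.logb 2 T ≤ (α - 1) * Real.logb 2 M := by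
    have := Real.logb_le_logb_of_le one_lt_two hQ hQM
    rw [Real.logb_mul (by positivity) hT.ne', Real.logb_rpow_eq_mul_logb_of_pos hM] at this
    linarith
  rw [hdiff, Set.mem_Icc, div_le_iff₀' (by linarith)]
  exact ⟨div_nonneg (sub_nonneg.2 (Real.logb_le_logb_of_le one_lt_two hT hTQ)) (by linarith),
    hupper⟩

namespace Matrix

lemma mul_normSq_le_of_posSemidef_diagonal_sub {κ : Type*} [DecidableEq κ] {l : κ → ℝ} {a : ℝ}
    {s : κ → ℂ} (h : (diagonal (fun i => (l i : ℂ)) - (a : ℂ) • vecMulVec s (star s)).PosSemidef)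
    (i : κ) : a * Complex.normSq (s i) ≤ l i := by
  have := h.diag_nonneg (i := i)
  simp only [sub_apply, diagonal_apply_eq, smul_apply, vecMulVec_apply, Pi.star_apply,
    Complex.star_def, Complex.mul_conj, smul_eq_mul] at this
  exact_mod_cast sub_nonneg.1 this

lemma eq_sum_mul_normSq_of_diagonal_eq_sum {κ ι : Type*} [DecidableEq κ] [Fintype ι]
    {l : κ → ℝ} {c : ι → ℝ} {v : ι → κ → ℂ}
    (hdiag : diagonal (fun i => (l i : ℂ)) = ∑ z, (c z : ℂ) • vecMulVec (v z) (star (v z)))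
    (i : κ) : l i = ∑ z, c z * Complex.normSq (v z i) := by
  have := congrArg (fun M => (M i i).re) hdiag
  simpa [sum_apply, vecMulVec_apply, Complex.re_sum, Complex.mul_conj] using this

lemma isHermitian_sum_smul {κ ι : Type*} [Fintype ι] {ρ : ι → Matrix κ κ ℂ} {p : ι → ℝ}
    (hρ : ∀ x, (ρ x).PosSemidef) (hp : ∀ x, 0 ≤ p x) : (∑ x, (p x : ℂ) • ρ x).IsHermitian :=
  (posSemidef_sum _ fun x _ => (hρ x).smul (Complex.zero_le_real.2 (hp x))).isHermitian

variable {κ : Type*} [Fintype κ] [DecidableEq κ]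

lemma IsHermitian.trace_funCalc {A : Matrix κ κ ℂ} (hA : A.IsHermitian) (f : ℝ → ℝ) :
    (funCalc f A).trace = ∑ i, (f (hA.eigenvalues i) : ℂ) := by
  rw [funCalc, dif_pos hA, trace_mul_cycle,
    (mem_unitaryGroup_iff').mp hA.eigenvectorUnitary.2, one_mul, trace_diagonal]

lemma IsHermitian.re_trace_mpow {A : Matrix κ κ ℂ} (hA : A.IsHermitian) (c : ℝ) :
    (mpow A c).trace.re = ∑ i, hA.eigenvalues i ^ c := by
  simp [mpow, hA.trace_funCalc, Complex.re_sum]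

lemma normSq_mem_doublyStochastic (U : unitaryGroup κ ℂ) :
    of (fun i j => Complex.normSq (U i j)) ∈ doublyStochastic ℝ κ := by
  have entry (V : Matrix κ κ ℂ) (i : κ) :
      ((V * star V) i i).re = ∑ j, Complex.normSq (V i j) := by
    simp [mul_apply, Complex.re_sum, Complex.mul_conj]
  refine mem_doublyStochastic_iff_sum.2
    ⟨fun i j => Complex.normSq_nonneg _, fun i => ?_, fun j => ?_⟩
  · simpa [(mem_unitaryGroup_iff).mp U.2] using (entry U i).symm
  · simpa [(mem_unitaryGroup_iff).mp (star U).2] using (entry (star U) j).symm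

lemma sum_normSq_transpose_apply (U : unitaryGroup κ ℂ) (j : κ) :
    ∑ i, Complex.normSq ((U : Matrix κ κ ℂ)ᵀ j i) = 1 :=
  sum_col_of_mem_doublyStochastic (normSq_mem_doublyStochastic U) j

lemma mul_diagonal_mul_star_eq_sum_vecMulVec (B : Matrix κ κ ℂ) (d : κ → ℂ) :
    B * diagonal d * star B = ∑ j, d j • vecMulVec (Bᵀ j) (star (Bᵀ j)) := by
  ext i k
  rw [mul_apply]
  simp only [mul_diagonal, sum_apply, smul_apply, vecMulVec_apply, transpose_apply,
    star_apply, Pi.star_apply, smul_eq_mul]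
  exact sum_congr rfl fun j _ => by ring

lemma mul_sq_le_of_posSemidef_diagonal_sub {l : κ → ℝ} {a : ℝ} {s : κ → ℂ}
    (h : (diagonal (fun i => (l i : ℂ)) - (a : ℂ) • vecMulVec s (star s)).PosSemidef) :
    a * (∑ i, Complex.normSq (s i) / l i) ^ 2 ≤ ∑ i, Complex.normSq (s i) / l i := by
  set S := ∑ i, Complex.normSq (s i) / l i
  -- the test vector `diagonal l⁻¹ *ᵥ s`; division by zero makes it vanish off the support of `l`
  set x : κ → ℂ := fun i => s i / l i
  have hxs i : star (x i) * s i = (Complex.normSq (s i) / l i : ℝ) := by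
    simp [x, Complex.normSq_eq_conj_mul_self, div_eq_mul_inv, mul_comm, mul_left_comm]
  have hsx i : star (s i) * x i = (Complex.normSq (s i) / l i : ℝ) := by
    rw [← hxs]; simp [x, div_eq_mul_inv]; ring
  have hxlx i : star (x i) * (l i * x i) = (Complex.normSq (s i) / l i : ℝ) := by
    rcases eq_or_ne (l i) 0 with h0 | h0
    · simp [x, h0]
    · rw [← hxs, show (l i : ℂ) * x i = s i by simp [x, mul_div_cancel₀, h0]]
  have hform : star x ⬝ᵥ (diagonal (fun i => (l i : ℂ)) - (a : ℂ) • vecMulVec s (star s)) *ᵥ x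
      = ((S - a * S ^ 2 : ℝ) : ℂ) := by
    rw [sub_mulVec, smul_mulVec, vecMulVec_mulVec, dotProduct_sub, dotProduct_smul,
      dotProduct_smul]
    simp only [dotProduct, Pi.star_apply, mulVec_diagonal, hxlx, hsx, hxs, smul_eq_mul,
      MulOpposite.smul_eq_mul_unop, MulOpposite.unop_op]
    push_cast [S]
    ring
  have := h.dotProduct_mulVec_nonneg x
  rw [hform] at this
  linarith [Complex.zero_le_real.1 this]

section RankOneDecomposition

variable {ι : Type*} [Fintype ι] {l : κ → ℝ} {c : ι → ℝ} {v : ι → κ → ℂ}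

lemma posSemidef_diagonal_sub_of_diagonal_eq_sum
    (hdiag : diagonal (fun i => (l i : ℂ)) = ∑ z, (c z : ℂ) • vecMulVec (v z) (star (v z)))
    (hc : ∀ z, 0 ≤ c z) (z : ι) :
    (diagonal (fun i => (l i : ℂ)) - (c z : ℂ) • vecMulVec (v z) (star (v z))).PosSemidef := by
  classical
  rw [hdiag, ← add_sum_erase _ _ (mem_univ z), add_sub_cancel_left]
  exact posSemidef_sum _ fun y _ =>
    (posSemidef_vecMulVec_self_star (v y)).smul (Complex.zero_le_real.2 (hc y))

lemma rpow_le_sum_normSq_mul_rpow_of_diagonal_eq_sum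
    (hdiag : diagonal (fun i => (l i : ℂ)) = ∑ z, (c z : ℂ) • vecMulVec (v z) (star (v z)))
    (hc : ∀ z, 0 ≤ c z) (hv : ∀ z, ∑ i, Complex.normSq (v z i) = 1)
    {β : ℝ} (hβ : 0 < β) (z : ι) : c z ^ β ≤ ∑ i, Complex.normSq (v z i) * l i ^ β :=
  have h := posSemidef_diagonal_sub_of_diagonal_eq_sum hdiag hc z
  rpow_le_sum_mul_rpow_of_mul_sq_le (fun _ => Complex.normSq_nonneg _) (hv z) (hc z) hβ
    (mul_normSq_le_of_posSemidef_diagonal_sub h) (mul_sq_le_of_posSemidef_diagonal_sub h)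

lemma sum_rpow_le_sum_rpow_of_diagonal_eq_sum
    (hdiag : diagonal (fun i => (l i : ℂ)) = ∑ z, (c z : ℂ) • vecMulVec (v z) (star (v z)))
    (hc : ∀ z, 0 ≤ c z) (hv : ∀ z, ∑ i, Complex.normSq (v z i) = 1)
    {α : ℝ} (hα : 1 < α) : ∑ z, c z ^ α ≤ ∑ i, l i ^ α := by
  have hl i : 0 ≤ l i := eq_sum_mul_normSq_of_diagonal_eq_sum hdiag i ▸
    sum_nonneg fun z _ => mul_nonneg (hc z) (Complex.normSq_nonneg _)
  calc ∑ z, c z ^ α = ∑ z, c z * c z ^ (α - 1) :=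
        sum_congr rfl fun z _ => Real.rpow_eq_mul_rpow_sub_one (hc z) (by linarith)
    _ ≤ ∑ z, c z * ∑ i, Complex.normSq (v z i) * l i ^ (α - 1) :=
        sum_le_sum fun z _ => mul_le_mul_of_nonneg_left
          (rpow_le_sum_normSq_mul_rpow_of_diagonal_eq_sum hdiag hc hv (by linarith) z) (hc z)
    _ = ∑ i, (∑ z, c z * Complex.normSq (v z i)) * l i ^ (α - 1) := by
        simp_rw [mul_sum, sum_mul, mul_assoc]; exact sum_comm
    _ = ∑ i, l i ^ α := by
        simp_rw [← eq_sum_mul_normSq_of_diagonal_eq_sum hdiag]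
        exact sum_congr rfl fun i _ => (Real.rpow_eq_mul_rpow_sub_one (hl i) (by linarith)).symm

end RankOneDecomposition

noncomputable def IsHermitian.eigenvectorUnitaryIn {B : Matrix κ κ ℂ} (hB : B.IsHermitian)
    (U : unitaryGroup κ ℂ) : unitaryGroup κ ℂ :=
  star U * hB.eigenvectorUnitary

lemma IsHermitian.star_mul_mul_eq_sum_vecMulVec {B : Matrix κ κ ℂ} (hB : B.IsHermitian)
    (U : unitaryGroup κ ℂ) :
    star (U : Matrix κ κ ℂ) * B * U = ∑ j, (hB.eigenvalues j : ℂ) •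
      vecMulVec ((hB.eigenvectorUnitaryIn U : Matrix κ κ ℂ)ᵀ j)
        (star ((hB.eigenvectorUnitaryIn U : Matrix κ κ ℂ)ᵀ j)) := by
  conv_lhs => rw [hB.spectral_theorem, Unitary.conjStarAlgAut_apply]
  rw [← mul_diagonal_mul_star_eq_sum_vecMulVec, IsHermitian.eigenvectorUnitaryIn,
    Submonoid.coe_mul, Unitary.coe_star, star_mul, star_star]
  simp only [Matrix.mul_assoc]
  rfl

variable {ι : Type*} [Fintype ι] {ρ : ι → Matrix κ κ ℂ} {p : ι → ℝ}

lemma IsHermitian.diagonal_eigenvalues_sum_smul (hρ : ∀ x, (ρ x).IsHermitian)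
    (hσ : (∑ x, (p x : ℂ) • ρ x).IsHermitian) :
    diagonal (fun i => (hσ.eigenvalues i : ℂ)) = ∑ z : ι × κ,
      ((p z.1 * (hρ z.1).eigenvalues z.2 : ℝ) : ℂ) •
        vecMulVec (((hρ z.1).eigenvectorUnitaryIn hσ.eigenvectorUnitary : Matrix κ κ ℂ)ᵀ z.2)
          (star (((hρ z.1).eigenvectorUnitaryIn hσ.eigenvectorUnitary : Matrix κ κ ℂ)ᵀ z.2)) := by
  have := hσ.conjStarAlgAut_star_eigenvectorUnitary
  rw [Unitary.conjStarAlgAut_star_apply] at this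
  rw [show diagonal (fun i => (hσ.eigenvalues i : ℂ)) = diagonal (RCLike.ofReal ∘ hσ.eigenvalues)
    from rfl, ← this, Fintype.sum_prod_type, mul_sum, sum_mul]
  refine sum_congr rfl fun x _ => ?_
  rw [Matrix.mul_smul, Matrix.smul_mul, (hρ x).star_mul_mul_eq_sum_vecMulVec, smul_sum]
  simp_rw [smul_smul, Complex.ofReal_mul]

lemma sum_rpow_mul_re_trace_mpow_le (hρ : ∀ x, (ρ x).PosSemidef) (hp : ∀ x, 0 ≤ p x)
    {α : ℝ} (hα : 1 < α) :
    ∑ x, p x ^ α * (mpow (ρ x) α).trace.re ≤ (mpow (∑ x, (p x : ℂ) • ρ x) α).trace.re := by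
  have hσ := isHermitian_sum_smul hρ hp
  have hρH x := (hρ x).isHermitian
  calc ∑ x, p x ^ α * (mpow (ρ x) α).trace.re
      = ∑ z : ι × κ, (p z.1 * (hρH z.1).eigenvalues z.2) ^ α := by
        simp_rw [Fintype.sum_prod_type, (hρH _).re_trace_mpow, mul_sum,
          Real.mul_rpow (hp _) ((hρ _).eigenvalues_nonneg _)]
    _ ≤ ∑ i, hσ.eigenvalues i ^ α := sum_rpow_le_sum_rpow_of_diagonal_eq_sum
        (IsHermitian.diagonal_eigenvalues_sum_smul hρH hσ)
        (fun z => mul_nonneg (hp z.1) ((hρ z.1).eigenvalues_nonneg z.2))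
        (fun z => sum_normSq_transpose_apply _ z.2) hα
    _ = (mpow (∑ x, (p x : ℂ) • ρ x) α).trace.re := (hσ.re_trace_mpow α).symm

lemma re_trace_mpow_sum_smul_le (hρ : ∀ x, (ρ x).PosSemidef) (hp : ∀ x, 0 ≤ p x)
    {α : ℝ} (hα : 1 ≤ α) :
    (mpow (∑ x, (p x : ℂ) • ρ x) α).trace.re
      ≤ (Fintype.card ι : ℝ) ^ (α - 1) * ∑ x, p x ^ α * (mpow (ρ x) α).trace.re := by
  have hσ := isHermitian_sum_smul hρ hp
  have hρH x := (hρ x).isHermitian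
  set N : ι → Matrix κ κ ℝ := fun x =>
    of fun i j => Complex.normSq ((hρH x).eigenvectorUnitaryIn hσ.eigenvectorUnitary i j)
  set μ : ι → κ → ℝ := fun x => N x *ᵥ (hρH x).eigenvalues
  have hμ x i : 0 ≤ μ x i :=
    sum_nonneg fun j _ => mul_nonneg (Complex.normSq_nonneg _) ((hρ x).eigenvalues_nonneg j)
  have hl i : hσ.eigenvalues i = ∑ x, p x * μ x i := by
    rw [eq_sum_mul_normSq_of_diagonal_eq_sum
      (IsHermitian.diagonal_eigenvalues_sum_smul hρH hσ) i, Fintype.sum_prod_type]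
    refine sum_congr rfl fun x _ => ?_
    simp_rw [μ, mulVec, dotProduct, mul_sum, N, of_apply, transpose_apply]
    exact sum_congr rfl fun j _ => by ring
  rw [hσ.re_trace_mpow, ← card_univ]
  calc ∑ i, hσ.eigenvalues i ^ α = ∑ i, (∑ x, p x * μ x i) ^ α := by simp_rw [hl]
    _ ≤ ∑ i, (#univ : ℝ) ^ (α - 1) * ∑ x, (p x * μ x i) ^ α :=
        sum_le_sum fun i _ => Real.rpow_sum_le_const_mul_sum_rpow_of_nonneg univ hα
          fun x _ => mul_nonneg (hp x) (hμ x i)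
    _ = (#univ : ℝ) ^ (α - 1) * ∑ x, p x ^ α * ∑ i, μ x i ^ α := by
        simp only [mul_sum, Real.mul_rpow (hp _) (hμ _ _)]
        exact sum_comm
    _ ≤ (#univ : ℝ) ^ (α - 1) * ∑ x, p x ^ α * (mpow (ρ x) α).trace.re := by
        refine mul_le_mul_of_nonneg_left (sum_le_sum fun x _ =>
          mul_le_mul_of_nonneg_left ?_ (Real.rpow_nonneg (hp x) α)) (by positivity)
        rw [(hρH x).re_trace_mpow]
        exact sum_mulVec_rpow_le_of_mem_doublyStochastic (normSq_mem_doublyStochastic _)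
          (hρ x).eigenvalues_nonneg hα

end Matrix

lemma IsDensity.sum_eigenvalues {κ : Type*} [Fintype κ] [DecidableEq κ] {ρ : Matrix κ κ ℂ}
    (hρ : IsDensity ρ) : ∑ i, hρ.1.isHermitian.eigenvalues i = 1 := by
  have := congrArg Complex.re (hρ.1.isHermitian.trace_eq_sum_eigenvalues.symm.trans hρ.2)
  simpa [Complex.re_sum] using this

lemma IsDensity.re_trace_mpow_pos {κ : Type*} [Fintype κ] [DecidableEq κ] {ρ : Matrix κ κ ℂ}
    (hρ : IsDensity ρ) (α : ℝ) : 0 < (mpow ρ α).trace.re := by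
  rw [hρ.1.isHermitian.re_trace_mpow]
  obtain ⟨j, -, hj⟩ := exists_ne_zero_of_sum_ne_zero (hρ.sum_eigenvalues ▸ one_ne_zero)
  exact sum_pos' (fun i _ => Real.rpow_nonneg (hρ.1.eigenvalues_nonneg i) α)
    ⟨j, mem_univ j, Real.rpow_pos_of_pos ((hρ.1.eigenvalues_nonneg j).lt_of_ne' hj) α⟩

theorem renyi_cq_bounds_general {n : Type*} [Fintype n] [DecidableEq n] {m : ℕ}
    (ρ : Fin m → Matrix n n ℂ) (hρ : ∀ x, IsDensity (ρ x))
    (p : Fin m → ℝ) (hp : ∀ x, 0 ≤ p x) (hp1 : ∑ x, p x = 1)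
    (α : ℝ) (hα1 : 1 < α) :
    (1 / (1 - α)) * Real.logb 2 (∑ x, p x ^ α * (mpow (ρ x) α).trace.re)
        - renyiEntropy α (∑ x, (p x : ℂ) • ρ x) ≤ Real.logb 2 m
    ∧ 0 ≤ (1 / (1 - α)) * Real.logb 2 (∑ x, p x ^ α * (mpow (ρ x) α).trace.re)
        - renyiEntropy α (∑ x, (p x : ℂ) • ρ x) := by
  have hpos : 0 < ∑ x, p x ^ α * (mpow (ρ x) α).trace.re := by
    obtain ⟨x, -, hx⟩ := exists_ne_zero_of_sum_ne_zero (hp1 ▸ one_ne_zero)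
    exact sum_pos' (fun y _ => mul_nonneg (Real.rpow_nonneg (hp y) α)
      ((hρ y).re_trace_mpow_pos α).le) ⟨x, mem_univ x,
        mul_pos (Real.rpow_pos_of_pos ((hp x).lt_of_ne' hx) α) ((hρ x).re_trace_mpow_pos α)⟩
  have hρ' x := (hρ x).1
  rw [renyiEntropy, if_neg hα1.ne']
  exact (one_div_one_sub_mul_logb_sub_mem_Icc hα1 m.cast_nonneg hpos
    (sum_rpow_mul_re_trace_mpow_le hρ' hp hα1)
    (by simpa using re_trace_mpow_sum_smul_le hρ' hp hα1.le)).symm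

theorem renyi_cq_bounds {n : Type*} [Fintype n] [DecidableEq n] {m : ℕ}
    (ρ : Fin m → Matrix n n ℂ) (hρ : ∀ x, IsDensity (ρ x))
    (p : Fin m → ℝ) (hp : ∀ x, 0 ≤ p x) (hp1 : ∑ x, p x = 1)
    (α : ℝ) (hα1 : 1 < α) (hα2 : α ≤ 2) :
    (1 / (1 - α)) * Real.logb 2 (∑ x, p x ^ α * (mpow (ρ x) α).trace.re)
        - renyiEntropy α (∑ x, (p x : ℂ) • ρ x) ≤ Real.logb 2 m
    ∧ 0 ≤ (1 / (1 - α)) * Real.logb 2 (∑ x, p x ^ α * (mpow (ρ x) α).trace.re)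
        - renyiEntropy α (∑ x, (p x : ℂ) • ρ x) :=
  renyi_cq_bounds_general ρ hρ p hp hp1 α hα1
end

section
/- Let |Ψ⟩^{AB} be a bipartite pure state with reduced states Ψ^A, Ψ^B, and let τ^A, σ^B be density matrices. Then F(Ψ^{AB}, τ^A ⊗ Ψ^B) ≥ [F(Ψ^{AB}, τ^A ⊗ σ^B)]^2, where F(ρ,σ) = ‖√ρ √σ‖_1 is the fidelity. -/
open Matrix BigOperators Kronecker ComplexOrder

/-! For a pure state `Ψ` the fidelity is `F(Ψ, ρ) = √⟨Ψ|ρ|Ψ⟩`. Writing `ψ = vec X` for the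
coefficient matrix `X`, one has `⟨Ψ|τ ⊗ ρ|Ψ⟩ = Tr(ρ W)` with `W = X τᵀ Xᴴ`, and `Ψ^B = X Xᴴ`.
Since `τᵀ ≤ 1` we get `0 ≤ W ≤ Ψ^B`, and the claim `Tr(σ W)² ≤ Tr(Ψ^B W)` follows from
`Tr(σ W)² ≤ Tr(σ W²) ≤ Tr(W²) ≤ Tr(Ψ^B W)`: the first step says that the variance of `W` in
the state `σ` is nonnegative, the second uses `σ ≤ 1`, the third `W ≤ Ψ^B`. -/

open scoped MatrixOrder

namespace Matrix

section RCLike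

variable {𝕜 n : Type*} [RCLike 𝕜] [Fintype n] [DecidableEq n]

lemma trace_mul_nonneg {A B : Matrix n n 𝕜} (hA : 0 ≤ A) (hB : 0 ≤ B) :
    0 ≤ (A * B).trace := by
  obtain ⟨C, rfl⟩ := CStarAlgebra.nonneg_iff_eq_star_mul_self.mp hB
  rw [← Matrix.mul_assoc, trace_mul_comm, ← Matrix.mul_assoc]
  exact (hA.posSemidef.mul_mul_conjTranspose_same C).trace_nonneg

lemma trace_mul_le_trace_mul {A B C : Matrix n n 𝕜} (hAB : A ≤ B) (hC : 0 ≤ C) :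
    (A * C).trace ≤ (B * C).trace := by
  have := trace_mul_nonneg (sub_nonneg.mpr hAB) hC
  rwa [Matrix.sub_mul, trace_sub, sub_nonneg] at this

lemma le_one_of_trace_eq_one {σ : Matrix n n 𝕜} (hσ : 0 ≤ σ) (ht : σ.trace = 1) : σ ≤ 1 := by
  have hH := hσ.posSemidef.isHermitian
  have hsum : ∑ i, hH.eigenvalues i = 1 := by
    have h := congrArg RCLike.re hH.trace_eq_sum_eigenvalues
    rw [ht] at h
    simpa using h.symm
  rw [← map_one (algebraMap ℝ (Matrix n n 𝕜))]
  refine le_algebraMap_of_spectrum_le ?_ hH.isSelfAdjoint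
  rw [hH.spectrum_real_eq_range_eigenvalues]
  rintro _ ⟨i, rfl⟩
  rw [← hsum]
  exact Finset.single_le_sum (fun j _ => hσ.posSemidef.eigenvalues_nonneg j) (Finset.mem_univ i)

lemma trace_mul_sq_le_trace_mul_mul_self {σ W : Matrix n n 𝕜} (hσ : 0 ≤ σ)
    (hσt : σ.trace = 1) (hW : W.IsHermitian) : (σ * W).trace ^ 2 ≤ (σ * (W * W)).trace := by
  set t := (σ * W).trace
  have ht : star t = t := by
    rw [← trace_conjTranspose, conjTranspose_mul, hW.eq, hσ.posSemidef.isHermitian.eq,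
      trace_mul_comm]
  set X := W - t • (1 : Matrix n n 𝕜)
  have hX : Xᴴ = X := by simp [X, conjTranspose_sub, conjTranspose_smul, ht, hW.eq]
  have hvar : (σ * (X * X)).trace = (σ * (W * W)).trace - t ^ 2 := by
    simp [X, Matrix.sub_mul, Matrix.mul_sub, trace_sub, trace_smul, hσt]
    ring
  have := trace_mul_nonneg hσ (posSemidef_conjTranspose_mul_self X).nonneg
  rwa [hX, hvar, sub_nonneg] at this

lemma trace_mul_sq_le_trace_mul_of_le {σ W B : Matrix n n 𝕜} (hσ : 0 ≤ σ)
    (hσt : σ.trace = 1) (hW : 0 ≤ W) (hWB : W ≤ B) : (σ * W).trace ^ 2 ≤ (B * W).trace := by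
  have hWW : 0 ≤ W * W := hW.posSemidef.isHermitian.isSelfAdjoint.mul_self_nonneg
  calc (σ * W).trace ^ 2 ≤ (σ * (W * W)).trace :=
        trace_mul_sq_le_trace_mul_mul_self hσ hσt hW.posSemidef.isHermitian
    _ ≤ (1 * (W * W)).trace := trace_mul_le_trace_mul (le_one_of_trace_eq_one hσ hσt) hWW
    _ = (W * W).trace := by rw [Matrix.one_mul]
    _ ≤ (B * W).trace := trace_mul_le_trace_mul hWB hW

lemma sqrt_eq_of_mul_self_eq_smul {A : Matrix n n 𝕜} {c : ℝ} (hA : 0 ≤ A) (hc : 0 ≤ c)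
    (h : A * A = c • A) : CFC.sqrt A = (√c)⁻¹ • A := by
  rcases hc.eq_or_lt with rfl | hc
  · have : A = 0 := by rw [← CFC.sqrt_mul_self A, h, zero_smul, CFC.sqrt_zero]
    simp [this]
  · refine CFC.sqrt_unique ?_ (hA.posSemidef.smul (inv_nonneg.mpr (Real.sqrt_nonneg c))).nonneg
    rw [smul_mul_smul, h, smul_smul, ← sq, inv_pow, Real.sq_sqrt hc.le, inv_mul_cancel₀ hc.ne',
      one_smul]

lemma trace_sqrt_vecMulVec_star (v : n → 𝕜) :
    (CFC.sqrt (vecMulVec v (star v))).trace = (√(RCLike.re (star v ⬝ᵥ v)) : 𝕜) := by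
  obtain ⟨c, hc, hcv⟩ := RCLike.nonneg_iff_exists_ofReal.mp (dotProduct_star_self_nonneg v)
  have hsq : vecMulVec v (star v) * vecMulVec v (star v) = c • vecMulVec v (star v) := by
    rw [vecMulVec_mul_vecMulVec, vecMulVec_smul, ← hcv, RCLike.real_smul_eq_coe_smul (K := 𝕜)]
  rw [sqrt_eq_of_mul_self_eq_smul (posSemidef_vecMulVec_self_star v).nonneg hc hsq, trace_smul,
    trace_vecMulVec, dotProduct_comm, ← hcv, RCLike.ofReal_re,
    RCLike.real_smul_eq_coe_smul (K := 𝕜), smul_eq_mul, ← RCLike.ofReal_mul, inv_mul_eq_div,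
    Real.div_sqrt]

end RCLike

lemma mul_mul_conjTranspose_mono {𝕜 m n : Type*} [RCLike 𝕜] [Fintype m] [Fintype n]
    (X : Matrix m n 𝕜) {A B : Matrix n n 𝕜} (hAB : A ≤ B) : X * A * Xᴴ ≤ X * B * Xᴴ := by
  rw [le_iff, ← Matrix.sub_mul, ← Matrix.mul_sub]
  exact (le_iff.mp hAB).mul_mul_conjTranspose_same X

lemma star_vec_dotProduct_kronecker_mulVec_vec {R a b : Type*} [CommSemiring R] [StarRing R]
    [Fintype a] [Fintype b] (X : Matrix b a R) (τ : Matrix a a R) (ρ : Matrix b b R) :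
    star (vec X) ⬝ᵥ (τ ⊗ₖ ρ) *ᵥ vec X = (ρ * (X * τᵀ * Xᴴ)).trace := by
  rw [kronecker_mulVec_vec, star_vec_dotProduct_vec, trace_mul_comm]
  simp only [Matrix.mul_assoc]

end Matrix

section Fidelity

variable {n : Type*} [Fintype n] [DecidableEq n]

lemma funCalc_eq_cfc {A : Matrix n n ℂ} (hA : A.IsHermitian) (f : ℝ → ℝ) :
    funCalc f A = cfc f A := by
  rw [funCalc, dif_pos hA, hA.cfc_eq, IsHermitian.cfc, Unitary.conjStarAlgAut_apply]
  rfl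

lemma mpow_half_eq_sqrt {A : Matrix n n ℂ} (hA : 0 ≤ A) : mpow A (1 / 2) = CFC.sqrt A := by
  rw [mpow, funCalc_eq_cfc hA.posSemidef.isHermitian, CFC.sqrt_eq_real_sqrt A hA, ← cfcₙ_eq_cfc]
  simp only [funext Real.sqrt_eq_rpow]

lemma fid_outer {ρ : Matrix n n ℂ} (hρ : 0 ≤ ρ) (ψ : n → ℂ) :
    fid (outer ψ) ρ = √(star ψ ⬝ᵥ ρ *ᵥ ψ).re := by
  set R := CFC.sqrt ρ
  have hR : Rᴴ = R := (CFC.sqrt_nonneg ρ).isSelfAdjoint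
  have hconj : R * outer ψ * R = vecMulVec (R *ᵥ ψ) (star (R *ᵥ ψ)) := by
    rw [show outer ψ = vecMulVec ψ (star ψ) from rfl, mul_vecMulVec, vecMulVec_mul, star_mulVec,
      hR]
  have hdot : star (R *ᵥ ψ) ⬝ᵥ R *ᵥ ψ = star ψ ⬝ᵥ ρ *ᵥ ψ := by
    rw [star_mulVec, hR, ← dotProduct_mulVec, mulVec_mulVec, CFC.sqrt_mul_sqrt_self ρ hρ]
  rw [fid, mpow_half_eq_sqrt hρ, hconj,
    mpow_half_eq_sqrt (posSemidef_vecMulVec_self_star _).nonneg, trace_sqrt_vecMulVec_star, hdot]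
  rfl

end Fidelity

lemma ptraceA_outer_vec {a b : Type*} [Fintype a] [Fintype b] (X : Matrix b a ℂ) :
    ptraceA (outer (vec X)) = X * Xᴴ := by
  ext i j
  simp [ptraceA, outer, vec, mul_apply]

theorem fid_pure_marginal_ge_sq_general {a b : Type*} [Fintype a] [Fintype b]
    [DecidableEq a] [DecidableEq b]
    (ψ : a × b → ℂ)
    (τ : Matrix a a ℂ) (σ : Matrix b b ℂ) (hτ : IsDensity τ) (hσ : IsDensity σ) :
    fid (outer ψ) (τ ⊗ₖ σ) ^ 2 ≤ fid (outer ψ) (τ ⊗ₖ ptraceA (outer ψ)) := by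
  obtain ⟨X, rfl⟩ := vec_bijective.surjective ψ
  have hτ1 : τᵀ ≤ 1 :=
    le_one_of_trace_eq_one hτ.1.transpose.nonneg (by rw [trace_transpose, hτ.2])
  have hW : 0 ≤ X * τᵀ * Xᴴ := (hτ.1.transpose.mul_mul_conjTranspose_same X).nonneg
  have hWB : X * τᵀ * Xᴴ ≤ X * Xᴴ := by simpa using mul_mul_conjTranspose_mono X hτ1
  rw [fid_outer (hτ.1.kronecker hσ.1).nonneg, ptraceA_outer_vec,
    fid_outer (hτ.1.kronecker (posSemidef_self_mul_conjTranspose X)).nonneg,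
    star_vec_dotProduct_kronecker_mulVec_vec, star_vec_dotProduct_kronecker_mulVec_vec]
  obtain ⟨ht0, ht⟩ := Complex.nonneg_iff.mp (trace_mul_nonneg hσ.1.nonneg hW)
  have key := (Complex.le_def.mp (trace_mul_sq_le_trace_mul_of_le hσ.1.nonneg hσ.2 hW hWB)).1
  rw [Real.sq_sqrt ht0]
  exact Real.le_sqrt_of_sq_le (by simpa [sq, ← ht] using key)

theorem fid_pure_marginal_ge_sq {a b : Type*} [Fintype a] [Fintype b]
    [DecidableEq a] [DecidableEq b]
    (ψ : a × b → ℂ) (hψ : ∑ x, Complex.normSq (ψ x) = 1)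
    (τ : Matrix a a ℂ) (σ : Matrix b b ℂ) (hτ : IsDensity τ) (hσ : IsDensity σ) :
    fid (outer ψ) (τ ⊗ₖ σ) ^ 2 ≤ fid (outer ψ) (τ ⊗ₖ ptraceA (outer ψ)) :=
  fid_pure_marginal_ge_sq_general ψ τ σ hτ hσ
end
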